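/- arXiv:2307.07716 — 2 statements merged into one kernel-verified Lean document; each statement's English description precedes it below -/
import Mathlib

section
/- Let m : [0,1] → [0,1] be an increasing bijection and t : [0,1] → [0,1] continuous and non-decreasing. The function f defined by f(x,y) = m^{-1}(t(s)·s) on Π_s = [0,t(s)]×[0,s] \ ⋃_{u<s}[0,t(u)]×[0,u], and f(x,y) = m^{-1}(t(1)+(1−t(1))y) for x > t(1), satisfies μ{(x,y) : f(x,y) > r} = 1 − m(r) for all r ∈ [0,1]. -/
/-!
On the layer `Π_s` the function `m ∘ f` equals `t s · s`, the area of the box `[0, t s] × [0, s]`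
swept out by the layers `Π_u`, `u ≤ s`; to the right of `x = t 1` it equals `t 1 + (1 - t 1) y`,
the area of `[0, t 1] × [0, 1]` together with the strip `[t 1, 1] × [0, y]`. So with `v = m r`,
`{f > r} = {m ∘ f > v}` is the complement of a swept region of area `v`: for `v ≤ t 1` the box
`[0, t s] × [0, s]` with `t s · s = v` (up to the null segment `y = 0`), where `s` exists by the
intermediate value theorem; for `v > t 1` the union of `[0, t 1] × [0, 1]` and `[0, 1] × [0, c]`
with `t 1 + (1 - t 1) c = v`.
-/

open MeasureTheory Set

lemma MonotoneOn.le_iff_le_of_isGreatest {α β : Type*} [Preorder α] [Preorder β]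
    {φ : α → β} {S : Set α} {v : β} {s u : α} (hφ : MonotoneOn φ S)
    (hs : IsGreatest (S ∩ φ ⁻¹' Iic v) s) (hu : u ∈ S) : φ u ≤ v ↔ u ≤ s :=
  ⟨fun h => hs.2 ⟨hu, h⟩, fun h => (hφ hu hs.1.1 h).trans hs.1.2⟩

lemma StrictMonoOn.lt_iff_lt_of_invOn {α β : Type*} [LinearOrder α] [Preorder β]
    {m : α → β} {minv : β → α} {S : Set α} {T : Set β} (hm : StrictMonoOn m S)
    (hinv : InvOn minv m S T) (hmaps : MapsTo minv T S) {a : α} {b : β} (ha : a ∈ S)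
    (hb : b ∈ T) : a < minv b ↔ m a < b := by
  rw [← hm.lt_iff_lt ha (hmaps hb), hinv.2 hb]

lemma volume_unitSquare_diff_box {a b : ℝ} (ha : a ∈ Icc (0:ℝ) 1) (hb : b ∈ Icc (0:ℝ) 1) :
    volume (Icc (0:ℝ) 1 ×ˢ Icc (0:ℝ) 1 \ Icc 0 a ×ˢ Icc 0 b) = ENNReal.ofReal (1 - a * b) := by
  have hbox : Icc 0 a ×ˢ Icc 0 b ⊆ Icc (0:ℝ) 1 ×ˢ Icc (0:ℝ) 1 :=
    prod_mono (Icc_subset_Icc_right ha.2) (Icc_subset_Icc_right hb.2)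
  rw [measure_sdiff hbox (measurableSet_Icc.prod measurableSet_Icc).nullMeasurableSet
    (isCompact_Icc.prod isCompact_Icc).measure_ne_top]
  simp only [Measure.volume_eq_prod, Measure.prod_prod, Real.volume_Icc, sub_zero]
  rw [← ENNReal.ofReal_mul ha.1, ENNReal.ofReal_one, one_mul, ← ENNReal.ofReal_one,
    ← ENNReal.ofReal_sub _ (mul_nonneg ha.1 hb.1)]

lemma volume_univ_prod_zero : volume ((univ : Set ℝ) ×ˢ ({0} : Set ℝ)) = 0 := by
  simp [Measure.volume_eq_prod, Measure.prod_prod]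

variable {t : ℝ → ℝ}

lemma monotoneOn_mul_id (htmono : MonotoneOn t (Icc 0 1))
    (htmaps : ∀ s ∈ Icc (0:ℝ) 1, t s ∈ Icc (0:ℝ) 1) :
    MonotoneOn (fun u => t u * u) (Icc 0 1) :=
  htmono.mul monotoneOn_id (fun u hu => (htmaps u hu).1) fun _ hu => hu.1

/-- The index `s` of the layer `Π_s` containing `p`, when `p.1 ≤ t 1`. -/
noncomputable def layerIndex (t : ℝ → ℝ) (p : ℝ × ℝ) : ℝ := sInf (Icc p.2 1 ∩ t ⁻¹' Ici p.1)

section layer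

variable {p : ℝ × ℝ} (htc : ContinuousOn t (Icc 0 1))
  (hp : p ∈ Icc (0:ℝ) 1 ×ˢ Icc (0:ℝ) 1) (hp1 : p.1 ≤ t 1)
include htc hp hp1

lemma isLeast_layerIndex : IsLeast (Icc p.2 1 ∩ t ⁻¹' Ici p.1) (layerIndex t p) :=
  ((htc.mono (Icc_subset_Icc_left hp.2.1)).upperSemicontinuousOn.isCompact_inter_preimage_Ici
    isCompact_Icc p.1).isLeast_sInf ⟨1, ⟨hp.2.2, le_rfl⟩, hp1⟩

lemma layerIndex_mem_Icc : layerIndex t p ∈ Icc (0:ℝ) 1 :=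
  Icc_subset_Icc_left hp.2.1 (isLeast_layerIndex htc hp hp1).1.1

lemma layerIndex_le_iff (htmono : MonotoneOn t (Icc 0 1)) {s : ℝ} (hs : s ∈ Icc (0:ℝ) 1) :
    layerIndex t p ≤ s ↔ p ∈ Icc 0 (t s) ×ˢ Icc 0 s := by
  have hu := isLeast_layerIndex htc hp hp1
  simp only [mem_prod, mem_Icc, hp.1.1, hp.2.1, true_and]
  refine ⟨fun h => ⟨hu.1.2.trans (htmono (layerIndex_mem_Icc htc hp hp1) hs h),
    hu.1.1.1.trans h⟩, fun h => hu.2 ⟨⟨h.2, hs.2⟩, h.1⟩⟩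

end layer

noncomputable def sweptArea (t : ℝ → ℝ) (p : ℝ × ℝ) : ℝ :=
  if p.1 ≤ t 1 then t (layerIndex t p) * layerIndex t p else t 1 + (1 - t 1) * p.2

section sweptArea

variable (htc : ContinuousOn t (Icc 0 1)) (htmono : MonotoneOn t (Icc 0 1))
  (htmaps : ∀ s ∈ Icc (0:ℝ) 1, t s ∈ Icc (0:ℝ) 1)
include htc htmaps

lemma sweptArea_mem_Icc {p : ℝ × ℝ} (hp : p ∈ Icc (0:ℝ) 1 ×ˢ Icc (0:ℝ) 1) :
    sweptArea t p ∈ Icc (0:ℝ) 1 := by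
  have ht1 := htmaps 1 ⟨zero_le_one, le_rfl⟩
  unfold sweptArea
  split_ifs with hp1
  · have hu := layerIndex_mem_Icc htc hp hp1
    exact unitInterval.mul_mem (htmaps _ hu) hu
  · constructor <;> nlinarith [hp.2.1, hp.2.2, ht1.1, ht1.2]

include htmono

lemma lt_sweptArea_iff_notMem_box {v s : ℝ} (hvt : v ≤ t 1)
    (hs : IsGreatest (Icc 0 1 ∩ (fun u => t u * u) ⁻¹' Iic v) s) {p : ℝ × ℝ}
    (hp : p ∈ Icc (0:ℝ) 1 ×ˢ Icc (0:ℝ) 1) (hp2 : 0 < p.2) :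
    v < sweptArea t p ↔ p ∉ Icc 0 (t s) ×ˢ Icc 0 s := by
  unfold sweptArea
  split_ifs with hp1
  · rw [← not_le, (monotoneOn_mul_id htmono htmaps).le_iff_le_of_isGreatest hs
      (layerIndex_mem_Icc htc hp hp1), layerIndex_le_iff htc hp hp1 htmono hs.1.1]
  · rw [not_le] at hp1
    have hts : t s ≤ t 1 := htmono hs.1.1 ⟨zero_le_one, le_rfl⟩ hs.1.1.2
    refine iff_of_true ?_ fun hbox => hp1.not_ge (hbox.1.2.trans hts)
    nlinarith [hp.1.2]

lemma volume_setOf_lt_sweptArea_of_le {v : ℝ} (hv : v ∈ Icc (0:ℝ) 1) (hvt : v ≤ t 1) :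
    volume {p | p ∈ Icc (0:ℝ) 1 ×ˢ Icc (0:ℝ) 1 ∧ v < sweptArea t p}
      = ENNReal.ofReal (1 - v) := by
  have hφc : ContinuousOn (fun u => t u * u) (Icc 0 1) := htc.mul continuousOn_id
  have hφ := monotoneOn_mul_id htmono htmaps
  obtain ⟨s, hs⟩ := (hφc.lowerSemicontinuousOn.isCompact_inter_preimage_Iic isCompact_Icc
    v).exists_isGreatest ⟨0, ⟨le_rfl, zero_le_one⟩, by simpa using hv.1⟩
  have hφs : t s * s = v := by
    obtain ⟨s₀, hs₀, hφs₀⟩ := intermediate_value_Icc zero_le_one hφc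
      (⟨by simpa using hv.1, by simpa using hvt⟩ : v ∈ Icc (t 0 * 0) (t 1 * 1))
    exact hs.1.2.antisymm (hφs₀ ▸ hφ hs₀ hs.1.1 (hs.2 ⟨hs₀, hφs₀.le⟩))
  set N : Set (ℝ × ℝ) := (univ : Set ℝ) ×ˢ ({0} : Set ℝ)
  have hoff : {p | p ∈ Icc (0:ℝ) 1 ×ˢ Icc (0:ℝ) 1 ∧ v < sweptArea t p} \ N
      = (Icc (0:ℝ) 1 ×ˢ Icc (0:ℝ) 1 \ Icc 0 (t s) ×ˢ Icc 0 s) \ N := by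
    ext p
    simp only [mem_sdiff, mem_ofPred_eq]
    refine and_congr_left fun hpN => and_congr_right fun hp =>
      lt_sweptArea_iff_notMem_box htc htmono htmaps hvt hs hp (hp.2.1.lt_of_ne' ?_)
    exact fun hp2 => hpN ⟨mem_univ _, hp2⟩
  rw [← measure_sdiff_null volume_univ_prod_zero, hoff, measure_sdiff_null volume_univ_prod_zero,
    volume_unitSquare_diff_box (htmaps s hs.1.1) hs.1.1, hφs]

lemma setOf_lt_sweptArea_of_lt {v : ℝ} (hv1 : v ≤ 1) (htv : t 1 < v) :
    {p | p ∈ Icc (0:ℝ) 1 ×ˢ Icc (0:ℝ) 1 ∧ v < sweptArea t p}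
      = Ioc (t 1) 1 ×ˢ Ioc ((v - t 1) / (1 - t 1)) 1 := by
  have ht1 := htmaps 1 ⟨zero_le_one, le_rfl⟩
  have hden : 0 < 1 - t 1 := by linarith
  ext p
  simp only [mem_ofPred_eq, sweptArea]
  split_ifs with hp1
  · refine iff_of_false (fun ⟨hp, hlt⟩ => ?_) fun hp => hp1.not_gt hp.1.1
    have hu := layerIndex_mem_Icc htc hp hp1
    have hφu := monotoneOn_mul_id htmono htmaps hu ⟨zero_le_one, le_rfl⟩ hu.2
    linarith
  · rw [not_le] at hp1
    simp only [mem_prod, mem_Ioc, mem_Icc, div_lt_iff₀ hden]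
    constructor
    · rintro ⟨⟨⟨-, hx1⟩, -, hy1⟩, hlt⟩
      exact ⟨⟨hp1, hx1⟩, by linarith, hy1⟩
    · rintro ⟨⟨-, hx1⟩, hy, hy1⟩
      exact ⟨⟨⟨ht1.1.trans hp1.le, hx1⟩, by nlinarith, hy1⟩, by linarith⟩

lemma volume_setOf_lt_sweptArea {v : ℝ} (hv : v ∈ Icc (0:ℝ) 1) :
    volume {p | p ∈ Icc (0:ℝ) 1 ×ˢ Icc (0:ℝ) 1 ∧ v < sweptArea t p}
      = ENNReal.ofReal (1 - v) := by
  rcases le_or_gt v (t 1) with hvt | htv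
  · exact volume_setOf_lt_sweptArea_of_le htc htmono htmaps hv hvt
  · have hden : 0 < 1 - t 1 := by linarith [hv.2]
    rw [setOf_lt_sweptArea_of_lt htc htmono htmaps hv.2 htv, Measure.volume_eq_prod,
      Measure.prod_prod, Real.volume_Ioc, Real.volume_Ioc, ← ENNReal.ofReal_mul hden.le]
    congr 1
    field_simp
    ring

end sweptArea

lemma apply_eq_minv_sweptArea {minv : ℝ → ℝ} {f : ℝ × ℝ → ℝ}
    (htc : ContinuousOn t (Icc 0 1))
    (hfPi : ∀ s ∈ Icc (0:ℝ) 1, ∀ p ∈ (Icc (0:ℝ) (t s) ×ˢ Icc (0:ℝ) s) \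
        ⋃ u ∈ Ico (0:ℝ) s, (Icc (0:ℝ) (t u) ×ˢ Icc (0:ℝ) u), f p = minv (t s * s))
    (hfright : ∀ p : ℝ × ℝ, p ∈ Icc (0:ℝ) 1 ×ˢ Icc (0:ℝ) 1 → t 1 < p.1 →
      f p = minv (t 1 + (1 - t 1) * p.2))
    {p : ℝ × ℝ} (hp : p ∈ Icc (0:ℝ) 1 ×ˢ Icc (0:ℝ) 1) :
    f p = minv (sweptArea t p) := by
  unfold sweptArea
  split_ifs with hp1
  · have hu := isLeast_layerIndex htc hp hp1
    refine hfPi _ (layerIndex_mem_Icc htc hp hp1) p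
      ⟨⟨⟨hp.1.1, hu.1.2⟩, hp.2.1, hu.1.1.1⟩, ?_⟩
    simp only [mem_iUnion₂, mem_prod, mem_Icc, not_exists]
    exact fun w hw ⟨⟨_, hxw⟩, _, hyw⟩ =>
      hw.2.not_ge (hu.2 ⟨⟨hyw, hw.2.le.trans (layerIndex_mem_Icc htc hp hp1).2⟩, hxw⟩)
  · exact hfright p hp (not_le.mp hp1)

/-- The extremal function defined by `f = m⁻¹(t(s)·s)` on
`Π_s = [0,t(s)]×[0,s] \ ⋃_{u<s} [0,t(u)]×[0,u]` and `f (x,y) = m⁻¹(t(1)+(1−t(1))y)` for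
`x > t(1)` satisfies `μ{(x,y) ∈ [0,1]² : f (x,y) > r} = 1 − m r` for all `r ∈ [0,1]`. -/
theorem extremal_function_distribution
    (m minv : ℝ → ℝ)
    (hm : StrictMonoOn m (Set.Icc 0 1))
    (hmbij : Set.BijOn m (Set.Icc 0 1) (Set.Icc 0 1))
    (hminv : Set.InvOn minv m (Set.Icc 0 1) (Set.Icc 0 1))
    (t : ℝ → ℝ)
    (htc : ContinuousOn t (Set.Icc 0 1)) (htmono : MonotoneOn t (Set.Icc 0 1))
    (htmaps : ∀ s ∈ Set.Icc (0:ℝ) 1, t s ∈ Set.Icc (0:ℝ) 1)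
    (f : ℝ × ℝ → ℝ)
    (hfPi : ∀ s ∈ Set.Icc (0:ℝ) 1, ∀ p ∈
      (Set.Icc (0:ℝ) (t s) ×ˢ Set.Icc (0:ℝ) s) \
        ⋃ u ∈ Set.Ico (0:ℝ) s, (Set.Icc (0:ℝ) (t u) ×ˢ Set.Icc (0:ℝ) u),
      f p = minv (t s * s))
    (hfright : ∀ p : ℝ × ℝ, p ∈ Set.Icc (0:ℝ) 1 ×ˢ Set.Icc (0:ℝ) 1 → t 1 < p.1 →
      f p = minv (t 1 + (1 - t 1) * p.2)) :
    ∀ r ∈ Set.Icc (0:ℝ) 1,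
      volume {p : ℝ × ℝ | p ∈ Set.Icc (0:ℝ) 1 ×ˢ Set.Icc (0:ℝ) 1 ∧ r < f p}
        = ENNReal.ofReal (1 - m r) := by
  intro r hr
  have hminv_maps : MapsTo minv (Icc 0 1) (Icc 0 1) := (hmbij.symm hminv.symm).mapsTo
  have hsuperlevel : {p : ℝ × ℝ | p ∈ Icc (0:ℝ) 1 ×ˢ Icc (0:ℝ) 1 ∧ r < f p}
      = {p | p ∈ Icc (0:ℝ) 1 ×ˢ Icc (0:ℝ) 1 ∧ m r < sweptArea t p} := by
    ext p
    refine and_congr_right fun hp => ?_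
    rw [apply_eq_minv_sweptArea htc hfPi hfright hp]
    exact hm.lt_iff_lt_of_invOn hminv hminv_maps hr (sweptArea_mem_Icc htc htmaps hp)
  rw [hsuperlevel]
  exact volume_setOf_lt_sweptArea htc htmono htmaps (hmbij.mapsTo hr)
end

section
/- Let m : [0,1] → [0,1] be an increasing bijection and t : [0,1] → [0,1] continuous and non-decreasing. Then the infimum over all measurable coordinate-wise non-decreasing f : [0,1]² → [0,1] with μ{f > r} ≥ 1 − m(r) for all r ∈ [0,1] of ∫_0^1 f(t(s), s) ds equals ∫_0^1 m^{-1}(t(s)·s) ds, and this infimum is attained. -/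
/-!
Lower bound: if `f` is non-decreasing in each variable, then `f ≤ f x y` on `[0,x] × [0,y]`, so
`{f > f x y}` has area at most `1 - x y`; the constraint at `r = f x y` then forces
`x y ≤ m (f x y)`, i.e. `f (t s) s ≥ m⁻¹ (t s · s)` pointwise.

Attainment: let `τ` be the generalized inverse of `t` and `f x y = m⁻¹ (t σ · σ)` with
`σ = max y (τ x)` (and `f = 1` where `σ > 1`). Since `τ (t s) ≤ s`, `f (t s) s = m⁻¹ (t s · s)`.
If `s_r` is the largest `s` with `t s · s ≤ m r`, then `{f ≤ r}` lies in the rectangle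
`[0, t s_r] × [0, s_r]`, so `μ{f > r} ≥ 1 - t s_r · s_r ≥ 1 - m r`.
-/

open MeasureTheory Set

local notation "𝕀" => Icc (0 : ℝ) 1

theorem Real.volume_Icc_prod_Icc (a b c d : ℝ) :
    volume (Icc a b ×ˢ Icc c d) = ENNReal.ofReal (b - a) * ENNReal.ofReal (d - c) := by
  rw [Measure.volume_eq_prod, Measure.prod_prod, Real.volume_Icc, Real.volume_Icc]

theorem volume_unitSquare_diff_Icc_prod_Icc {a b : ℝ} (ha : a ∈ 𝕀) (hb : b ∈ 𝕀) :
    volume (𝕀 ×ˢ 𝕀 \ Icc 0 a ×ˢ Icc 0 b) = ENNReal.ofReal (1 - a * b) := by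
  have hsub : Icc 0 a ×ˢ Icc 0 b ⊆ 𝕀 ×ˢ 𝕀 :=
    prod_mono (Icc_subset_Icc_right ha.2) (Icc_subset_Icc_right hb.2)
  rw [measure_sdiff hsub (measurableSet_Icc.prod measurableSet_Icc).nullMeasurableSet
      (by rw [Real.volume_Icc_prod_Icc]; finiteness),
    Real.volume_Icc_prod_Icc, Real.volume_Icc_prod_Icc, sub_zero, sub_zero, sub_zero,
    ← ENNReal.ofReal_mul ha.1, ← ENNReal.ofReal_mul zero_le_one, one_mul,
    ← ENNReal.ofReal_sub _ (mul_nonneg ha.1 hb.1)]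

theorem monotoneOn_mul_id_s15 {t : ℝ → ℝ} (htm : MonotoneOn t 𝕀) (htI : MapsTo t 𝕀 𝕀) :
    MonotoneOn (fun s => t s * s) 𝕀 :=
  htm.mul monotoneOn_id (fun _ hs => (htI hs).1) fun _ hs => hs.1

theorem mapsTo_mul_id {t : ℝ → ℝ} (htI : MapsTo t 𝕀 𝕀) : MapsTo (fun s => t s * s) 𝕀 𝕀 :=
  fun _ hs => unitInterval.mul_mem (htI hs) hs

/-- The paper's class `M`. -/
structure IsAdmissible (m : ℝ → ℝ) (f : ℝ → ℝ → ℝ) : Prop where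
  measurable : Measurable fun p : ℝ × ℝ => f p.1 p.2
  mem_Icc : ∀ x ∈ 𝕀, ∀ y ∈ 𝕀, f x y ∈ 𝕀
  mono : ∀ x₁ ∈ 𝕀, ∀ x₂ ∈ 𝕀, ∀ y₁ ∈ 𝕀, ∀ y₂ ∈ 𝕀, x₁ ≤ x₂ → y₁ ≤ y₂ → f x₁ y₁ ≤ f x₂ y₂
  volume_superlevel : ∀ r ∈ 𝕀,
    ENNReal.ofReal (1 - m r) ≤ volume {p : ℝ × ℝ | p ∈ 𝕀 ×ˢ 𝕀 ∧ r < f p.1 p.2}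

namespace IsAdmissible

variable {m minv t : ℝ → ℝ} {f : ℝ → ℝ → ℝ}

theorem mul_le_map_apply (hf : IsAdmissible m f) {x y : ℝ} (hx : x ∈ 𝕀) (hy : y ∈ 𝕀) :
    x * y ≤ m (f x y) := by
  have hsub : {p : ℝ × ℝ | p ∈ 𝕀 ×ˢ 𝕀 ∧ f x y < f p.1 p.2} ⊆ 𝕀 ×ˢ 𝕀 \ Icc 0 x ×ˢ Icc 0 y := by
    rintro ⟨u, v⟩ ⟨⟨hu, hv⟩, hlt⟩
    exact ⟨⟨hu, hv⟩, fun ⟨⟨_, hux⟩, ⟨_, hvy⟩⟩ => (hf.mono u hu x hx v hv y hy hux hvy).not_gt hlt⟩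
  have hvol : ENNReal.ofReal (1 - m (f x y)) ≤ ENNReal.ofReal (1 - x * y) :=
    (hf.volume_superlevel _ (hf.mem_Icc x hx y hy)).trans <|
      (measure_mono hsub).trans_eq (volume_unitSquare_diff_Icc_prod_Icc hx hy)
  have hxy : x * y ≤ 1 := (unitInterval.mul_mem hx hy).2
  linarith [(ENNReal.ofReal_le_ofReal_iff (by linarith)).mp hvol]

theorem map_mul_le_apply (hf : IsAdmissible m f) (hminv : MonotoneOn minv 𝕀) (hm : MapsTo m 𝕀 𝕀)
    (hinv : LeftInvOn minv m 𝕀) {x y : ℝ} (hx : x ∈ 𝕀) (hy : y ∈ 𝕀) :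
    minv (x * y) ≤ f x y :=
  calc minv (x * y) ≤ minv (m (f x y)) :=
        hminv (unitInterval.mul_mem hx hy) (hm (hf.mem_Icc x hx y hy)) (hf.mul_le_map_apply hx hy)
    _ = f x y := hinv (hf.mem_Icc x hx y hy)

theorem integral_le (hf : IsAdmissible m f) (hminv : MonotoneOn minv 𝕀) (hm : MapsTo m 𝕀 𝕀)
    (hinv : LeftInvOn minv m 𝕀) (ht : MonotoneOn t 𝕀) (htI : MapsTo t 𝕀 𝕀) :
    ∫ s in (0 : ℝ)..1, minv (t s * s) ≤ ∫ s in (0 : ℝ)..1, f (t s) s := by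
  refine intervalIntegral.integral_mono_on zero_le_one ?_ ?_
    fun s hs => hf.map_mul_le_apply hminv hm hinv (htI hs) hs
  · refine MonotoneOn.intervalIntegrable ?_
    rw [uIcc_of_le zero_le_one]
    exact hminv.comp (monotoneOn_mul_id_s15 ht htI) (mapsTo_mul_id htI)
  · refine MonotoneOn.intervalIntegrable ?_
    rw [uIcc_of_le zero_le_one]
    exact fun a ha b hb hab => hf.mono _ (htI ha) _ (htI hb) a ha b hb (ht ha hb hab) hab

end IsAdmissible

/-- The least `s ∈ [0,1]` with `x ≤ t s`, and `2` when there is none. -/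
noncomputable def firstHit (t : ℝ → ℝ) (x : ℝ) : ℝ := sInf (insert 2 {s ∈ 𝕀 | x ≤ t s})

section firstHit

variable {t : ℝ → ℝ}

theorem bddBelow_insert_two (x : ℝ) : BddBelow (insert 2 {s ∈ 𝕀 | x ≤ t s}) :=
  ⟨0, by
    rintro s (rfl | ⟨hs, -⟩)
    exacts [zero_le_two, hs.1]⟩

theorem monotone_firstHit : Monotone (firstHit t) := fun _ _ h =>
  csInf_le_csInf (bddBelow_insert_two _) (insert_nonempty _ _)
    (insert_subset_insert fun _ ⟨hs, hx⟩ => ⟨hs, h.trans hx⟩)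

theorem firstHit_apply_le {s : ℝ} (hs : s ∈ 𝕀) : firstHit t (t s) ≤ s :=
  csInf_le (bddBelow_insert_two _) (mem_insert_of_mem _ ⟨hs, le_rfl⟩)

theorem firstHit_mem_of_le_one (ht : ContinuousOn t 𝕀) {x : ℝ} (h : firstHit t x ≤ 1) :
    firstHit t x ∈ 𝕀 ∧ x ≤ t (firstHit t x) := by
  have hK : IsCompact (insert 2 {s ∈ 𝕀 | x ≤ t s}) :=
    (isCompact_Icc.of_isClosed_subset
      (ht.preimage_isClosed_of_isClosed isClosed_Icc isClosed_Ici) inter_subset_left).insert 2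
  rcases hK.sInf_mem (insert_nonempty _ _) with h2 | hS
  · rw [firstHit, h2] at h
    norm_num at h
  · exact hS

end firstHit

noncomputable def unitExtend (g : ℝ → ℝ) (σ : ℝ) : ℝ := if σ ≤ 1 then g (max σ 0) else 1

section unitExtend

variable {g : ℝ → ℝ}

theorem unitExtend_of_mem {σ : ℝ} (hσ : σ ∈ 𝕀) : unitExtend g σ = g σ := by
  rw [unitExtend, if_pos hσ.2, max_eq_left hσ.1]

theorem unitExtend_mem (hg : MapsTo g 𝕀 𝕀) (σ : ℝ) : unitExtend g σ ∈ 𝕀 := by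
  unfold unitExtend
  split_ifs with h
  · exact hg ⟨le_max_right _ _, max_le h zero_le_one⟩
  · exact right_mem_Icc.2 zero_le_one

theorem monotone_unitExtend (hg : MonotoneOn g 𝕀) (hgI : MapsTo g 𝕀 𝕀) :
    Monotone (unitExtend g) := by
  intro a b hab
  by_cases hb : b ≤ 1
  · rw [unitExtend, unitExtend, if_pos (hab.trans hb), if_pos hb]
    exact hg ⟨le_max_right _ _, max_le (hab.trans hb) zero_le_one⟩
      ⟨le_max_right _ _, max_le hb zero_le_one⟩ (max_le_max_right 0 hab)
  · conv_rhs => rw [unitExtend, if_neg hb]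
    exact (unitExtend_mem hgI a).2

end unitExtend

noncomputable def optimal (g t : ℝ → ℝ) (x y : ℝ) : ℝ := unitExtend g (max y (firstHit t x))

section optimal

variable {g t : ℝ → ℝ}

theorem optimal_apply_self {s : ℝ} (hs : s ∈ 𝕀) : optimal g t (t s) s = g s := by
  rw [optimal, max_eq_left (firstHit_apply_le hs), unitExtend_of_mem hs]

theorem measurable_optimal (hg : MonotoneOn g 𝕀) (hgI : MapsTo g 𝕀 𝕀) :
    Measurable fun p : ℝ × ℝ => optimal g t p.1 p.2 :=
  (monotone_unitExtend hg hgI).measurable.comp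
    (measurable_snd.max (monotone_firstHit.measurable.comp measurable_fst))

theorem diff_subset_setOf_lt_optimal (htc : ContinuousOn t 𝕀) (htm : MonotoneOn t 𝕀)
    {r s₀ : ℝ} (hr : r < 1) (hs₀ : s₀ ∈ 𝕀) (hgr : ∀ σ ∈ 𝕀, g σ ≤ r → σ ≤ s₀) :
    𝕀 ×ˢ 𝕀 \ Icc 0 (t s₀) ×ˢ Icc 0 s₀ ⊆ {p : ℝ × ℝ | p ∈ 𝕀 ×ˢ 𝕀 ∧ r < optimal g t p.1 p.2} := by
  rintro ⟨x, y⟩ ⟨⟨hx, hy⟩, hrect⟩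
  refine ⟨⟨hx, hy⟩, lt_of_not_ge fun hle => hrect ?_⟩
  have hσ : max y (firstHit t x) ≤ 1 := by
    by_contra h
    rw [optimal, unitExtend, if_neg h] at hle
    exact hr.not_ge hle
  have hσI : max y (firstHit t x) ∈ 𝕀 := ⟨hy.1.trans (le_max_left _ _), hσ⟩
  have hσs₀ := hgr _ hσI (by rwa [optimal, unitExtend_of_mem hσI] at hle)
  obtain ⟨hτI, hxτ⟩ := firstHit_mem_of_le_one htc ((le_max_right _ _).trans hσ)
  exact ⟨⟨hx.1, hxτ.trans (htm hτI hs₀ ((le_max_right _ _).trans hσs₀))⟩,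
    ⟨hy.1, (le_max_left _ _).trans hσs₀⟩⟩

end optimal

section optimalAdmissible

variable {m minv t : ℝ → ℝ}

theorem volume_superlevel_optimal (hm : MonotoneOn m 𝕀) (hmbij : BijOn m 𝕀 𝕀)
    (hinv : RightInvOn minv m 𝕀) (hminvI : MapsTo minv 𝕀 𝕀) (htc : ContinuousOn t 𝕀)
    (htm : MonotoneOn t 𝕀) (htI : MapsTo t 𝕀 𝕀) {r : ℝ} (hr : r ∈ 𝕀) :
    ENNReal.ofReal (1 - m r) ≤
      volume {p : ℝ × ℝ | p ∈ 𝕀 ×ˢ 𝕀 ∧ r < optimal (fun s => minv (t s * s)) t p.1 p.2} := by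
  have h1 : (1 : ℝ) ∈ 𝕀 := right_mem_Icc.2 zero_le_one
  rcases hr.2.eq_or_lt with rfl | hr1
  · obtain ⟨x, hx, hmx⟩ := hmbij.surjOn h1
    have : 1 ≤ m 1 := hmx.symm.trans_le (hm hx h1 hx.2)
    rw [ENNReal.ofReal_of_nonpos (by linarith)]
    exact zero_le
  have hq := mapsTo_mul_id htI
  obtain ⟨s₀, ⟨hs₀, hqs₀⟩, hmax⟩ : ∃ s₀, IsGreatest {s ∈ 𝕀 | t s * s ≤ m r} s₀ :=
    (isCompact_Icc.of_isClosed_subset ((htc.mul continuousOn_id).preimage_isClosed_of_isClosed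
      isClosed_Icc isClosed_Iic) inter_subset_left).exists_isGreatest
      ⟨0, left_mem_Icc.2 zero_le_one, by simpa using (hmbij.mapsTo hr).1⟩
  have hgr : ∀ σ ∈ 𝕀, minv (t σ * σ) ≤ r → σ ≤ s₀ := fun σ hσ h =>
    hmax ⟨hσ, (hinv (hq hσ)).symm.trans_le (hm (hminvI (hq hσ)) hr h)⟩
  calc ENNReal.ofReal (1 - m r) ≤ ENNReal.ofReal (1 - t s₀ * s₀) :=
        ENNReal.ofReal_le_ofReal (by linarith)
    _ = volume (𝕀 ×ˢ 𝕀 \ Icc 0 (t s₀) ×ˢ Icc 0 s₀) :=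
        (volume_unitSquare_diff_Icc_prod_Icc (htI hs₀) hs₀).symm
    _ ≤ _ := measure_mono (diff_subset_setOf_lt_optimal htc htm hr1 hs₀ hgr)

theorem isAdmissible_optimal (hm : MonotoneOn m 𝕀) (hmbij : BijOn m 𝕀 𝕀)
    (hinv : RightInvOn minv m 𝕀) (hminvI : MapsTo minv 𝕀 𝕀) (hminv : MonotoneOn minv 𝕀)
    (htc : ContinuousOn t 𝕀) (htm : MonotoneOn t 𝕀) (htI : MapsTo t 𝕀 𝕀) :
    IsAdmissible m (optimal (fun s => minv (t s * s)) t) := by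
  have hg : MonotoneOn (fun s => minv (t s * s)) 𝕀 :=
    hminv.comp (monotoneOn_mul_id_s15 htm htI) (mapsTo_mul_id htI)
  have hgI : MapsTo (fun s => minv (t s * s)) 𝕀 𝕀 := hminvI.comp (mapsTo_mul_id htI)
  exact ⟨measurable_optimal hg hgI, fun _ _ _ _ => unitExtend_mem hgI _,
    fun _ _ _ _ _ _ _ _ hx hy => monotone_unitExtend hg hgI (max_le_max hy (monotone_firstHit hx)),
    fun _ hr => volume_superlevel_optimal hm hmbij hinv hminvI htc htm htI hr⟩

end optimalAdmissible

/-- Theorem 1 of the paper: the infimum over all measurable coordinate-wise non-decreasing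
`f : [0,1]² → [0,1]` with `μ{f > r} ≥ 1 − m r` (`r ∈ [0,1]`) of `∫₀¹ f (t s, s) ds` equals
`∫₀¹ m⁻¹(t s · s) ds`, and it is attained, i.e. it is the least element of the set of values. -/
theorem inf_line_integral
    (m minv : ℝ → ℝ)
    (hm : StrictMonoOn m (Set.Icc 0 1))
    (hmbij : Set.BijOn m (Set.Icc 0 1) (Set.Icc 0 1))
    (hminv : Set.InvOn minv m (Set.Icc 0 1) (Set.Icc 0 1))
    (t : ℝ → ℝ)
    (htc : ContinuousOn t (Set.Icc 0 1)) (htmono : MonotoneOn t (Set.Icc 0 1))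
    (htmaps : ∀ s ∈ Set.Icc (0:ℝ) 1, t s ∈ Set.Icc (0:ℝ) 1) :
    IsLeast
      {I : ℝ | ∃ f : ℝ → ℝ → ℝ,
        (Measurable fun p : ℝ × ℝ => f p.1 p.2) ∧
        (∀ x ∈ Set.Icc (0:ℝ) 1, ∀ y ∈ Set.Icc (0:ℝ) 1, f x y ∈ Set.Icc (0:ℝ) 1) ∧
        (∀ x₁ ∈ Set.Icc (0:ℝ) 1, ∀ x₂ ∈ Set.Icc (0:ℝ) 1,
          ∀ y₁ ∈ Set.Icc (0:ℝ) 1, ∀ y₂ ∈ Set.Icc (0:ℝ) 1,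
          x₁ ≤ x₂ → y₁ ≤ y₂ → f x₁ y₁ ≤ f x₂ y₂) ∧
        (∀ r ∈ Set.Icc (0:ℝ) 1,
          ENNReal.ofReal (1 - m r) ≤
            volume {p : ℝ × ℝ | p ∈ Set.Icc (0:ℝ) 1 ×ˢ Set.Icc (0:ℝ) 1 ∧ r < f p.1 p.2}) ∧
        I = ∫ s in (0:ℝ)..1, f (t s) s}
      (∫ s in (0:ℝ)..1, minv (t s * s)) := by
  have hminvI : MapsTo minv 𝕀 𝕀 := (hmbij.symm hminv.symm).mapsTo
  have hminvm : MonotoneOn minv 𝕀 :=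
    Function.monotoneOn_of_rightInvOn_of_mapsTo hm.monotoneOn hminv.2 hminvI
  refine ⟨⟨optimal (fun s => minv (t s * s)) t, ?_⟩, ?_⟩
  · obtain ⟨h₁, h₂, h₃, h₄⟩ := isAdmissible_optimal hm.monotoneOn hmbij hminv.2 hminvI hminvm
      htc htmono htmaps
    refine ⟨h₁, h₂, h₃, h₄, intervalIntegral.integral_congr fun s hs => ?_⟩
    rw [optimal_apply_self (uIcc_of_le (zero_le_one (α := ℝ)) ▸ hs)]
  · rintro _ ⟨f, h₁, h₂, h₃, h₄, rfl⟩
    exact IsAdmissible.integral_le ⟨h₁, h₂, h₃, h₄⟩ hminvm hmbij.mapsTo hminv.1 htmono htmaps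
end
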